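/- Let I be a conditional independence relation on finite V satisfying Strong Union, Intersection, and the pairwise Markov property with respect to graph G. Define the Markov blanket closure C(G) as the set of assertions: for each X and each neighbor Y of X, the dependence assertion ¬I(X,Y|MB(X)∖{Y}); and for each X and each non-neighbor Y ≠ X, the independence assertion I(X,Y|MB(X)). Then C(G) completely determines G: for any graph G' on V such that I satisfies all the assertions in C(G'), we have G' = G. -/

import Mathlib

/-!
Strong Union makes `I X Y ·` monotone, so an independence `I X Y (MB'(X))` read off `G'` lifts to
`I X Y (V ∖ {X, Y})`, which by the pairwise Markov property removes the edge `XY` from `G`.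
Conversely, starting from the dependence `¬ I X Y (MB'(X) ∖ {Y})` for a `G'`-neighbour `Y`, the
vertices outside `MB'(X)` are added to the conditioning set one at a time: each such `W` satisfies
`I X W (MB'(X))`, so Intersection keeps the dependence alive up to `¬ I X Y (V ∖ {X, Y})`, which
by the pairwise Markov property is the edge `XY` in `G`.
-/

namespace Finset

variable {α : Type*} [DecidableEq α]

theorem induction_on_superset {P : Finset α → Prop} {Z Z' : Finset α} (hZ : Z ⊆ Z') (base : P Z)
    (step : ∀ a T, a ∈ Z' \ Z → T ⊆ Z' → Z ⊆ T → a ∉ T → P T → P (insert a T)) : P Z' := by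
  suffices ∀ D ⊆ Z' \ Z, P (Z ∪ D) by simpa [union_sdiff_of_subset hZ] using this _ subset_rfl
  intro D hD
  induction D using Finset.induction_on with
  | empty => simpa using base
  | @insert a D haD ih =>
    have ha : a ∈ Z' \ Z := hD (mem_insert_self a D)
    have hDZ : D ⊆ Z' \ Z := (subset_insert a D).trans hD
    rw [union_insert]
    refine step a _ ha (union_subset hZ (hDZ.trans sdiff_subset)) subset_union_left ?_
      (ih hDZ)
    simp only [mem_union, not_or]
    exact ⟨(mem_sdiff.mp ha).2, haD⟩

end Finset

section ConditionalIndependence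

variable {V : Type*} [DecidableEq V]

def StrongUnion (I : V → V → Finset V → Prop) : Prop :=
  ∀ (X Y W : V) (Z : Finset V), X ≠ Y → W ∉ Z → W ≠ X → W ≠ Y → I X Y Z → I X Y (insert W Z)

def Intersection (I : V → V → Finset V → Prop) : Prop :=
  ∀ (X Y W : V) (Z : Finset V), X ≠ Y → X ≠ W → Y ≠ W → X ∉ Z → Y ∉ Z → W ∉ Z →
    ¬ I X Y Z → I X W (insert Y Z) → ¬ I X Y (insert W Z)

variable {I : V → V → Finset V → Prop} {X Y : V} {Z Z' : Finset V}

theorem StrongUnion.mono (hSU : StrongUnion I) (hXY : X ≠ Y) (hZ : Z ⊆ Z') (hX : X ∉ Z')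
    (hY : Y ∉ Z') (hI : I X Y Z) : I X Y Z' := by
  refine Finset.induction_on_superset hZ hI fun a T ha _ _ haT hIT => ?_
  have haZ' := (Finset.mem_sdiff.mp ha).1
  exact hSU X Y a T hXY haT (ne_of_mem_of_not_mem haZ' hX) (ne_of_mem_of_not_mem haZ' hY) hIT

theorem Intersection.not_of_subset (hSU : StrongUnion I) (hInt : Intersection I) (hXY : X ≠ Y)
    (hZ : Z ⊆ Z') (hX : X ∉ Z') (hY : Y ∉ Z') (hdep : ¬ I X Y Z)
    (hind : ∀ W ∈ Z' \ Z, I X W (insert Y Z)) : ¬ I X Y Z' := by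
  refine Finset.induction_on_superset (P := fun T => ¬ I X Y T) hZ hdep
    fun a T ha hTZ' hZT haT hdepT => ?_
  have haZ' := (Finset.mem_sdiff.mp ha).1
  have haX : X ≠ a := ne_of_mem_of_not_mem haZ' hX |>.symm
  have haY : Y ≠ a := ne_of_mem_of_not_mem haZ' hY |>.symm
  have hXT : X ∉ T := fun h => hX (hTZ' h)
  have hYT : Y ∉ T := fun h => hY (hTZ' h)
  have hindT : I X a (insert Y T) :=
    hSU.mono haX (Finset.insert_subset_insert Y hZT) (by simp [hXY, hXT])
      (by simp [haY.symm, haT]) (hind a ha)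
  exact hInt X Y a T hXY haX haY hXT hYT haT hdepT hindT

end ConditionalIndependence

namespace SimpleGraph

variable {V : Type*} [Fintype V] [DecidableEq V] (G : SimpleGraph V) [DecidableRel G.Adj]
  {X Y : V}

theorem neighborFinset_sdiff_singleton_subset_compl_pair :
    G.neighborFinset X \ {Y} ⊆ Finset.univ \ {X, Y} := by
  intro z hz
  obtain ⟨hzN, hzY⟩ := Finset.mem_sdiff.mp hz
  simp only [Finset.mem_sdiff, Finset.mem_univ, Finset.mem_insert, true_and, not_or]
  exact ⟨((G.mem_neighborFinset X z).mp hzN).ne.symm, hzY⟩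

theorem neighborFinset_subset_compl_pair (h : ¬ G.Adj X Y) :
    G.neighborFinset X ⊆ Finset.univ \ {X, Y} := by
  intro z hz
  have hadj := (G.mem_neighborFinset X z).mp hz
  simp only [Finset.mem_sdiff, Finset.mem_univ, Finset.mem_insert, Finset.mem_singleton, true_and,
    not_or]
  exact ⟨hadj.ne.symm, by rintro rfl; exact h hadj⟩

theorem insert_neighborFinset_sdiff_singleton (h : G.Adj X Y) :
    insert Y (G.neighborFinset X \ {Y}) = G.neighborFinset X := by
  rw [Finset.sdiff_singleton_eq_erase, Finset.insert_erase ((G.mem_neighborFinset X Y).mpr h)]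

end SimpleGraph

theorem Intersection.not_indep_compl_pair_of_adj {V : Type*} [Fintype V] [DecidableEq V]
    {I : V → V → Finset V → Prop} (hSU : StrongUnion I) (hInt : Intersection I)
    (G' : SimpleGraph V) [DecidableRel G'.Adj] {X Y : V}
    (hind : ∀ W, X ≠ W → ¬ G'.Adj X W → I X W (G'.neighborFinset X)) (h' : G'.Adj X Y)
    (hdep : ¬ I X Y (G'.neighborFinset X \ {Y})) : ¬ I X Y (Finset.univ \ {X, Y}) := by
  refine Intersection.not_of_subset hSU hInt h'.ne
    G'.neighborFinset_sdiff_singleton_subset_compl_pair (by simp) (by simp) hdep ?_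
  intro W hW
  simp only [Finset.mem_sdiff, Finset.mem_univ, Finset.mem_insert, Finset.mem_singleton,
    true_and, not_or, G'.mem_neighborFinset] at hW
  obtain ⟨⟨hWX, hWY⟩, hWN⟩ := hW
  rw [G'.insert_neighborFinset_sdiff_singleton h']
  exact hind W (Ne.symm hWX) fun hadj => hWN ⟨hadj, hWY⟩

theorem markov_blanket_closure_determines_structure_general
    {V : Type*} [Fintype V] [DecidableEq V]
    (I : V → V → Finset V → Prop)
    (G : SimpleGraph V)
    (hSU : ∀ (X Y W : V) (Z : Finset V), X ≠ Y → W ∉ Z → W ≠ X → W ≠ Y →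
      I X Y Z → I X Y (insert W Z))
    (hInt : ∀ (X Y W : V) (Z : Finset V), X ≠ Y → X ≠ W → Y ≠ W →
      X ∉ Z → Y ∉ Z → W ∉ Z →
      ¬ I X Y Z → I X W (insert Y Z) → ¬ I X Y (insert W Z))
    (hPM : ∀ X Y : V, X ≠ Y →
      (¬ G.Adj X Y ↔ I X Y (Finset.univ \ {X, Y})))
    (G' : SimpleGraph V) [DecidableRel G'.Adj]
    (hdep : ∀ X Y : V, G'.Adj X Y → ¬ I X Y (G'.neighborFinset X \ {Y}))
    (hind : ∀ X Y : V, X ≠ Y → ¬ G'.Adj X Y → I X Y (G'.neighborFinset X)) :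
    G' = G := by
  have hSU : StrongUnion I := hSU
  ext X Y
  constructor
  · intro h'
    by_contra h
    exact Intersection.not_indep_compl_pair_of_adj hSU hInt G' (hind X) h' (hdep X Y h')
      ((hPM X Y h'.ne).mp h)
  · intro h
    by_contra h'
    exact (hPM X Y h.ne).mpr (hSU.mono h.ne (G'.neighborFinset_subset_compl_pair h') (by simp)
      (by simp) (hind X Y h.ne h')) h

/-- the Markov blanket closure completely determines the structure. -/
theorem markov_blanket_closure_determines_structure
    {V : Type*} [Fintype V] [DecidableEq V]
    (I : V → V → Finset V → Prop)
    (G : SimpleGraph V) [DecidableRel G.Adj]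
    (hSU : ∀ (X Y W : V) (Z : Finset V), X ≠ Y → W ∉ Z → W ≠ X → W ≠ Y →
      I X Y Z → I X Y (insert W Z))
    (hInt : ∀ (X Y W : V) (Z : Finset V), X ≠ Y → X ≠ W → Y ≠ W →
      X ∉ Z → Y ∉ Z → W ∉ Z →
      ¬ I X Y Z → I X W (insert Y Z) → ¬ I X Y (insert W Z))
    (hPM : ∀ X Y : V, X ≠ Y →
      (¬ G.Adj X Y ↔ I X Y (Finset.univ \ {X, Y})))
    (G' : SimpleGraph V) [DecidableRel G'.Adj]
    (hdep : ∀ X Y : V, G'.Adj X Y → ¬ I X Y (G'.neighborFinset X \ {Y}))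
    (hind : ∀ X Y : V, X ≠ Y → ¬ G'.Adj X Y → I X Y (G'.neighborFinset X)) :
    G' = G :=
  markov_blanket_closure_determines_structure_general I G hSU hInt hPM G' hdep hind
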